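/- arXiv:1103.5251 — 2 statements merged into one kernel-verified Lean document; each statement's English description precedes it below -/
import Mathlib

section
/- In a P-semi-abelian category, if f and g are kernels and g ∘ f is defined, then g ∘ f is a kernel; dually, a composite of cokernels is a cokernel. -/
/-!
Kernels are regular, hence strong, monomorphisms, and strong monomorphisms are closed under
composition. A morphism `h` factors as `h = c ≫ image.ι h` with
`c = coimage.π h ≫ coimageImageComparison h`, and `c` is epic when the comparison map is.
Since `h` is a strong mono, so is its first factor `c`; being also epic, `c` is an isomorphism,
so `h` is isomorphic to `image.ι h = kernel.ι (cokernel.π h)` and hence a kernel.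
Dually for cokernels.
-/

open CategoryTheory CategoryTheory.Limits

universe v u

variable {C : Type u} [Category.{v} C] [Preadditive C] [HasKernels C] [HasCokernels C]

/-- A morphism arises as a kernel of some morphism. -/
def IsKernelMor {X Y : C} (f : X ⟶ Y) : Prop :=
  ∃ (Z : C) (g : Y ⟶ Z) (w : f ≫ g = 0), Nonempty (IsLimit (KernelFork.ofι f w))

/-- A morphism arises as a cokernel of some morphism. -/
def IsCokernelMor {X Y : C} (f : X ⟶ Y) : Prop :=
  ∃ (W : C) (g : W ⟶ X) (w : g ≫ f = 0), Nonempty (IsColimit (CokernelCofork.ofπ f w))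

/-- A semi-stable kernel: a kernel all of whose pushouts are kernels. -/
def SemiStableKernelMor {X Y : C} (f : X ⟶ Y) : Prop :=
  IsKernelMor f ∧ ∀ {X' P : C} (g : X ⟶ X') (h : Y ⟶ P) (i : X' ⟶ P),
    IsPushout f g h i → IsKernelMor i

/-- A semi-stable cokernel: a cokernel all of whose pullbacks are cokernels. -/
def SemiStableCokernelMor {X Y : C} (f : X ⟶ Y) : Prop :=
  IsCokernelMor f ∧ ∀ {Y' P : C} (g : Y' ⟶ Y) (fst : P ⟶ X) (snd : P ⟶ Y'),
    IsPullback fst snd f g → IsCokernelMor snd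

/-- Exactness at the middle object: `im a = ker b`. -/
def ExactAtMor {A B D : C} (a : A ⟶ B) (b : B ⟶ D) : Prop :=
  ∃ w : Abelian.image.ι a ≫ b = 0, Nonempty (IsLimit (KernelFork.ofι (Abelian.image.ι a) w))

omit [HasKernels C] [HasCokernels C] in
theorem IsKernelMor.strongMono {X Y : C} {f : X ⟶ Y} (hf : IsKernelMor f) : StrongMono f := by
  obtain ⟨Z, g, w, ⟨hl⟩⟩ := hf
  let _ : NormalMono f := ⟨Z, g, w, hl⟩
  infer_instance

omit [HasKernels C] [HasCokernels C] in
theorem IsCokernelMor.strongEpi {X Y : C} {f : X ⟶ Y} (hf : IsCokernelMor f) : StrongEpi f := by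
  obtain ⟨W, g, w, ⟨hl⟩⟩ := hf
  let _ : NormalEpi f := ⟨W, g, w, hl⟩
  infer_instance

theorem isKernelMor_of_strongMono {X Y : C} (h : X ⟶ Y) [StrongMono h]
    (hε : Epi (Abelian.coimageImageComparison h)) : IsKernelMor h := by
  let c := Abelian.coimage.π h ≫ Abelian.coimageImageComparison h
  have hc : c ≫ Abelian.image.ι h = h := by
    simp only [c, Category.assoc, Abelian.coimage_image_factorisation]
  have : StrongMono (c ≫ Abelian.image.ι h) := by rwa [hc]
  have : StrongMono c := strongMono_of_strongMono c (Abelian.image.ι h)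
  have : IsIso c := isIso_of_epi_of_strongMono c
  refine ⟨_, cokernel.π h, cokernel.condition h, ⟨?_⟩⟩
  exact IsLimit.ofIsoLimit (kernelIsKernel (cokernel.π h))
    (Fork.ext (asIso c).symm (by simp [← hc]))

theorem isCokernelMor_of_strongEpi {X Y : C} (h : X ⟶ Y) [StrongEpi h]
    (hμ : Mono (Abelian.coimageImageComparison h)) : IsCokernelMor h := by
  let c := Abelian.coimageImageComparison h ≫ Abelian.image.ι h
  have hc : Abelian.coimage.π h ≫ c = h := Abelian.coimage_image_factorisation h
  have : StrongEpi (Abelian.coimage.π h ≫ c) := by rwa [hc]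
  have : StrongEpi c := strongEpi_of_strongEpi (Abelian.coimage.π h) c
  have : IsIso c := isIso_of_mono_of_strongEpi c
  refine ⟨_, kernel.ι h, kernel.condition h, ⟨?_⟩⟩
  exact IsColimit.ofIsoColimit (cokernelIsCokernel (kernel.ι h))
    (Cofork.ext (asIso c) (by simp [← hc]))

/-- In a P-semi-abelian category, composites of kernels are kernels and composites of
cokernels are cokernels. -/
theorem stmt_8
    (hP : ∀ {X Y : C} (α : X ⟶ Y),
      Mono (Abelian.coimageImageComparison α) ∧ Epi (Abelian.coimageImageComparison α))
    {X Y Z : C} (f : X ⟶ Y) (g : Y ⟶ Z) :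
    (IsKernelMor f → IsKernelMor g → IsKernelMor (f ≫ g)) ∧
    (IsCokernelMor f → IsCokernelMor g → IsCokernelMor (f ≫ g)) := by
  constructor
  · intro hf hg
    have := hf.strongMono
    have := hg.strongMono
    exact isKernelMor_of_strongMono (f ≫ g) (hP (f ≫ g)).2
  · intro hf hg
    have := hf.strongEpi
    have := hg.strongEpi
    exact isCokernelMor_of_strongEpi (f ≫ g) (hP (f ≫ g)).1
end

section
/- Given a commutative diagram in a preabelian category with morphisms β : B → B', γ : C → C', φ : B → C, and a bottom row A' →ψ' B' →φ' C' exact at B', if the square φ' ∘ β = γ ∘ φ is a pullback, then there is a unique morphism ψ : A' → B such that β ∘ ψ = ψ' and φ ∘ ψ = 0. If moreover the canonical morphism ψ̄' : coim ψ' → im ψ' is an epimorphism, then the sequence A' →ψ B →φ C is exact at B. -/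
open CategoryTheory CategoryTheory.Limits

universe v u

variable {C : Type u} [Category.{v} C] [Preadditive C] [HasKernels C] [HasCokernels C]

/-! A pullback square identifies `ker φ` with `ker φ'` through `β`, so the factorisation
`A' → ker φ` of `ψ` is, up to that isomorphism, the factorisation of `ψ'` through
`ker φ' ≅ im ψ'`, namely `A' → coim ψ' → im ψ'`. When `ψ̄'` is epic this map is epic, and an
epimorphism `A' → ker φ` through which `ψ` factors forces `ker φ ⊆ im ψ`. -/

theorem CategoryTheory.IsPullback.epi_kernel_lift_of_epi {𝒞 : Type*} [Category 𝒞]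
    [HasZeroMorphisms 𝒞] {X₁ X₂ X₃ X₄ A : 𝒞} {t : X₁ ⟶ X₂} {l : X₁ ⟶ X₃} {r : X₂ ⟶ X₄}
    {b : X₃ ⟶ X₄} [HasKernel t] [HasKernel b] (sq : IsPullback t l r b)
    {x : A ⟶ X₁} {y : A ⟶ X₃} (hx : x ≫ t = 0) (hy : y ≫ b = 0) (hxy : x ≫ l = y)
    [Epi (kernel.lift b y hy)] : Epi (kernel.lift t x hx) := by
  have := isIso_kernel_map_of_isPullback sq
  have hfac : kernel.lift t x hx ≫ kernel.map t b l r sq.w = kernel.lift b y hy := by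
    ext; simp [hxy]
  rw [← epi_comp_iff_of_isIso _ (kernel.map t b l r sq.w), hfac]
  infer_instance

section ExactAtMor

variable {A B D : C} {a : A ⟶ B} {b : B ⟶ D}

theorem ExactAtMor.comp_eq_zero (h : ExactAtMor a b) : a ≫ b = 0 := by
  obtain ⟨w, -⟩ := h
  rw [← Abelian.image.fac a, Category.assoc, w, comp_zero]

theorem ExactAtMor.epi_kernel_lift (h : ExactAtMor a b)
    [Epi (Abelian.coimageImageComparison a)] : Epi (kernel.lift b a h.comp_eq_zero) := by
  have ⟨_, ⟨hlim⟩⟩ := h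
  let e := IsLimit.conePointUniqueUpToIso hlim (kernelIsKernel b)
  have he : e.hom ≫ kernel.ι b = Abelian.image.ι a :=
    IsLimit.conePointUniqueUpToIso_hom_comp hlim (kernelIsKernel b) WalkingParallelPair.zero
  have hfac : kernel.lift b a h.comp_eq_zero =
      Abelian.coimage.π a ≫ Abelian.coimageImageComparison a ≫ e.hom := by
    ext; simp [he]
  rw [hfac]
  infer_instance

theorem exactAtMor_of_epi_kernel_lift (w : a ≫ b = 0) [Epi (kernel.lift b a w)] :
    ExactAtMor a b := by
  have hker : kernel.ι b ≫ cokernel.π a = 0 := by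
    rw [← cancel_epi (kernel.lift b a w), kernel.lift_ι_assoc, cokernel.condition, comp_zero]
  have hw : Abelian.image.ι a ≫ b = 0 := by
    rw [← cokernel.π_desc a b w, kernel.condition_assoc, zero_comp]
  refine ⟨hw, ⟨KernelFork.IsLimit.ofι' _ hw fun g hg => ?_⟩⟩
  refine ⟨kernel.lift _ g ?_, kernel.lift_ι _ _ _⟩
  rw [← kernel.lift_ι b g hg, Category.assoc, hker, comp_zero]

end ExactAtMor

/-- Preabelian version of Lemma 1 of Fay–Hardie–Hilton: given a pullback square
`φ' ∘ β = γ ∘ φ` over an exact bottom row, there is a unique `ψ` with `β ∘ ψ = ψ'` and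
`φ ∘ ψ = 0`; if moreover `ψ̄'` is epic, the induced top row is exact. -/
theorem stmt_14 {A' B B' D D' : C} (φ : B ⟶ D) (β : B ⟶ B') (γ : D ⟶ D')
    (ψ' : A' ⟶ B') (φ' : B' ⟶ D')
    (hpb : IsPullback φ β γ φ')
    (hex : ExactAtMor ψ' φ') :
    (∃! ψ : A' ⟶ B, ψ ≫ β = ψ' ∧ ψ ≫ φ = 0) ∧
    (Epi (Abelian.coimageImageComparison ψ') →
      ∀ ψ : A' ⟶ B, ψ ≫ β = ψ' → ψ ≫ φ = 0 → ExactAtMor ψ φ) := by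
  have hcomm : (0 : A' ⟶ D) ≫ γ = ψ' ≫ φ' := by rw [zero_comp, hex.comp_eq_zero]
  refine ⟨⟨hpb.lift 0 ψ' hcomm, ⟨hpb.lift_snd _ _ _, hpb.lift_fst _ _ _⟩, ?_⟩, ?_⟩
  · rintro ψ ⟨hβ, hφ⟩
    exact hpb.hom_ext (by rw [hφ, hpb.lift_fst]) (by rw [hβ, hpb.lift_snd])
  · intro _ ψ hβ hφ
    have := hex.epi_kernel_lift
    have := hpb.epi_kernel_lift_of_epi hφ hex.comp_eq_zero hβ
    exact exactAtMor_of_epi_kernel_lift hφ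
end
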